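/- arXiv:2105.10776 — 2 statements merged into one kernel-verified Lean document; each statement's English description precedes it below -/
import Mathlib

section
/- Let S be segments with congestion c = cong(S), and suppose N̂ satisfies N̂ ≤ N ≤ γ'·N̂ where N = max over cells Q of the number of α-long segments of Q, and γ' = (1+δ)²/(1−δ). Then the quantity ĉ = N̂·α/(1+α) satisfies long-cong(T)/(√8 · γ' · (1+α)/α) ≤ ĉ ≤ c, where long-cong(T) is the maximum α-long congestion over all cells of the quadtree T. -/
/-!
A segment meets a square of radius `r`, whose diameter is `√8 r`, in a subset of a line, and the
length of such a set is at most its diameter. Hence each of the at most `N ≤ γ' N̂` long segments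
of a cell contributes at most `√8 r` to its long congestion.

Conversely, an `α`-long segment meeting `square p r` contains a subsegment of length `α r`
within distance `α r` of a meeting point, hence inside `square p ((1 + α) r)`. For a cell with
`N` long segments the congestion bound at radius `(1 + α) r` gives `N α r ≤ c (1 + α) r`.
-/

open Real MeasureTheory

/-- The axis-parallel square (`L∞`-ball) centered at `p` of radius `r` (side length `2r`). -/
def square (p : EuclideanSpace ℝ (Fin 2)) (r : ℝ) : Set (EuclideanSpace ℝ (Fin 2)) :=
  {x | ∀ i, |x i - p i| ≤ r}

open Metric Set

section Segment

variable {E : Type*} [NormedAddCommGroup E] [NormedSpace ℝ E]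

theorem Isometry.hausdorffMeasure_one_le_ediam {X : Type*} [EMetricSpace X] [MeasurableSpace X]
    [BorelSpace X] {f : ℝ → X} (hf : Isometry f) {s : Set X} (hs : s ⊆ range f) :
    μH[1] s ≤ ediam s := by
  rw [← image_preimage_eq_of_subset hs, hf.hausdorffMeasure_image (Or.inl zero_le_one),
    hf.ediam_image, hausdorffMeasure_real]
  exact Real.volume_le_diam _

theorem isometry_add_smul_of_norm_eq_one (x : E) {u : E} (hu : ‖u‖ = 1) :
    Isometry fun t : ℝ => x + t • u :=
  Isometry.of_dist_eq fun s t => by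
    rw [dist_add_left, dist_eq_norm, ← sub_smul, norm_smul, hu, mul_one, Real.dist_eq,
      Real.norm_eq_abs]

theorem exists_Icc_subset_unitInterval_mem {t h : ℝ} (ht : t ∈ Icc (0 : ℝ) 1) (hh : 0 ≤ h)
    (hh1 : h ≤ 1) : ∃ a, 0 ≤ a ∧ a + h ≤ 1 ∧ t ∈ Icc a (a + h) := by
  rcases le_total t (1 - h) with htl | htl
  · exact ⟨t, ht.1, by linarith, le_rfl, by linarith⟩
  · exact ⟨1 - h, by linarith, by linarith, htl, by linarith [ht.2]⟩

variable [MeasurableSpace E] [BorelSpace E]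

theorem hausdorffMeasure_one_le_ediam_of_subset_segment {x y : E} {s : Set E}
    (hs : s ⊆ segment ℝ x y) : μH[1] s ≤ ediam s := by
  rcases eq_or_ne x y with rfl | hxy
  · calc μH[1] s ≤ μH[1] (segment ℝ x x) := measure_mono hs
      _ = 0 := by rw [hausdorffMeasure_segment, edist_self]
      _ ≤ ediam s := bot_le
  have hu : ‖‖y - x‖⁻¹ • (y - x)‖ = 1 := norm_smul_inv_norm (sub_ne_zero.2 hxy.symm)
  refine (isometry_add_smul_of_norm_eq_one x hu).hausdorffMeasure_one_le_ediam (hs.trans ?_)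
  rw [segment_eq_image']
  rintro _ ⟨θ, -, rfl⟩
  refine ⟨θ * ‖y - x‖, ?_⟩
  simp only [smul_smul, mul_assoc, mul_inv_cancel₀ (norm_ne_zero_iff.2 (sub_ne_zero.2 hxy.symm)),
    mul_one]

theorem ofReal_le_hausdorffMeasure_segment_inter_closedBall {x y z : E} {ρ : ℝ}
    (hz : z ∈ segment ℝ x y) (hρ : ρ ≤ dist x y) :
    ENNReal.ofReal ρ ≤ μH[1] (segment ℝ x y ∩ closedBall z ρ) := by
  rcases le_or_gt ρ 0 with hρ0 | hρ0
  · simp [ENNReal.ofReal_of_nonpos hρ0]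
  rw [segment_eq_image_lineMap] at hz
  obtain ⟨t, ht, rfl⟩ := hz
  have hL : 0 < dist x y := hρ0.trans_le hρ
  have hh : 0 ≤ ρ / dist x y := div_nonneg hρ0.le hL.le
  obtain ⟨a, ha0, hah1, hta⟩ :=
    exists_Icc_subset_unitInterval_mem ht hh (div_le_one_of_le₀ hρ hL.le)
  set f := AffineMap.lineMap (k := ℝ) x y
  have hball : ∀ b ∈ Icc a (a + ρ / dist x y), f b ∈ closedBall (f t) ρ := fun b hb => by
    rw [mem_closedBall, dist_lineMap_lineMap, ← le_div_iff₀ hL, Real.dist_eq, abs_le]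
    constructor <;> linarith [hb.1, hb.2, hta.1, hta.2]
  have hsub : segment ℝ (f a) (f (a + ρ / dist x y)) ⊆ segment ℝ x y ∩ closedBall (f t) ρ :=
    subset_inter
      ((convex_segment x y).segment_subset (lineMap_mem_segment ℝ x y ⟨ha0, by linarith⟩)
        (lineMap_mem_segment ℝ x y ⟨by linarith, hah1⟩))
      ((convex_closedBall _ _).segment_subset (hball a ⟨le_rfl, by linarith⟩)
        (hball _ ⟨by linarith, le_rfl⟩))
  calc ENNReal.ofReal ρ = edist (f a) (f (a + ρ / dist x y)) := by
        rw [edist_dist, dist_lineMap_lineMap, Real.dist_eq, sub_add_cancel_left, abs_neg,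
          abs_of_pos (div_pos hρ0 hL), div_mul_cancel₀ _ hL.ne']
    _ = μH[1] (segment ℝ (f a) (f (a + ρ / dist x y))) := (hausdorffMeasure_segment _ _).symm
    _ ≤ _ := measure_mono hsub

end Segment

section Square

theorem dist_le_of_mem_square {p x y : EuclideanSpace ℝ (Fin 2)} {r : ℝ} (hx : x ∈ square p r)
    (hy : y ∈ square p r) : dist x y ≤ √8 * r := by
  have hr : 0 ≤ r := (abs_nonneg _).trans (hx 0)
  have hcoord : ∀ i, dist (x i) (y i) ≤ 2 * r := fun i => by
    rw [Real.dist_eq, two_mul]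
    exact (abs_sub_le _ (p i) _).trans (add_le_add (hx i) (abs_sub_comm (p i) (y i) ▸ hy i))
  calc dist x y = √(∑ i, dist (x i) (y i) ^ 2) := EuclideanSpace.dist_eq x y
    _ ≤ √(∑ _i : Fin 2, (2 * r) ^ 2) := by gcongr with i; exact hcoord i
    _ = √8 * r := by
        rw [Fin.sum_const, show 2 • (2 * r) ^ 2 = 8 * r ^ 2 by ring, sqrt_mul (by norm_num),
          sqrt_sq hr]

theorem closedBall_subset_square {p z : EuclideanSpace ℝ (Fin 2)} {r : ℝ} (hz : z ∈ square p r)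
    (ρ : ℝ) : closedBall z ρ ⊆ square p (r + ρ) := fun w hw i =>
  calc |w i - p i| ≤ |w i - z i| + |z i - p i| := abs_sub_le _ _ _
    _ ≤ ρ + r := add_le_add ((PiLp.dist_apply_le w z i).trans hw) (hz i)
    _ = r + ρ := add_comm ρ r

theorem hausdorffMeasure_segment_inter_square_le (x y p : EuclideanSpace ℝ (Fin 2)) (r : ℝ) :
    μH[1] (segment ℝ x y ∩ square p r) ≤ ENNReal.ofReal (√8 * r) :=
  (hausdorffMeasure_one_le_ediam_of_subset_segment inter_subset_left).trans <|
    ediam_le fun _ ha _ hb => by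
      rw [edist_dist]
      exact ENNReal.ofReal_le_ofReal (dist_le_of_mem_square ha.2 hb.2)

theorem ofReal_le_hausdorffMeasure_segment_inter_square {x y p : EuclideanSpace ℝ (Fin 2)}
    {r ρ : ℝ} (hρ : ρ ≤ dist x y) (hmeet : (segment ℝ x y ∩ square p r).Nonempty) :
    ENNReal.ofReal ρ ≤ μH[1] (segment ℝ x y ∩ square p (r + ρ)) := by
  obtain ⟨z, hzseg, hzsq⟩ := hmeet
  exact (ofReal_le_hausdorffMeasure_segment_inter_closedBall hzseg hρ).trans
    (measure_mono (inter_subset_inter_right _ (closedBall_subset_square hzsq ρ)))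

end Square

section Congestion

open Finset

variable (T : Finset (EuclideanSpace ℝ (Fin 2) × EuclideanSpace ℝ (Fin 2)))
  (p : EuclideanSpace ℝ (Fin 2))

theorem sum_clippedLength_le_card_mul {r : ℝ} (hr : 0 ≤ r) :
    ∑ s ∈ T, (μH[1] (segment ℝ s.1 s.2 ∩ square p r)).toReal ≤ #T * (√8 * r) := by
  rw [← nsmul_eq_mul]
  exact sum_le_card_nsmul _ _ _ fun s _ => ENNReal.toReal_le_of_le_ofReal (by positivity)
    (hausdorffMeasure_segment_inter_square_le s.1 s.2 p r)

theorem card_mul_le_sum_clippedLength {r ρ : ℝ}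
    (hT : ∀ s ∈ T, ρ ≤ dist s.1 s.2 ∧ (segment ℝ s.1 s.2 ∩ square p r).Nonempty) :
    #T * ρ ≤ ∑ s ∈ T, (μH[1] (segment ℝ s.1 s.2 ∩ square p (r + ρ))).toReal := by
  rw [← nsmul_eq_mul]
  refine card_nsmul_le_sum _ _ _ fun s hs => ?_
  have hfin : μH[1] (segment ℝ s.1 s.2 ∩ square p (r + ρ)) ≠ ⊤ :=
    ((measure_mono inter_subset_left).trans_lt
      ((hausdorffMeasure_segment s.1 s.2).trans_lt (edist_lt_top _ _))).ne
  exact (ENNReal.ofReal_le_iff_le_toReal hfin).1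
    (ofReal_le_hausdorffMeasure_segment_inter_square (hT s hs).1 (hT s hs).2)

end Congestion

/-- Let `S` have congestion `c`, let `N` be the maximum over the quadtree cells of the
number of `α`-long segments of a cell, and let `N̂` satisfy `N̂ ≤ N ≤ γ'·N̂` with
`γ' = (1+δ)²/(1−δ)`. Then `ĉ = N̂·α/(1+α)` satisfies
`long-cong(Q)/(√8·γ'·(1+α)/α) ≤ ĉ ≤ c` for every cell `Q` of the quadtree. -/
theorem stmt_15 (S : Finset (EuclideanSpace ℝ (Fin 2) × EuclideanSpace ℝ (Fin 2)))
    (cells : Finset (EuclideanSpace ℝ (Fin 2) × ℝ))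
    (hrpos : ∀ Q ∈ cells, 0 < Q.2)
    (α δ c N Nhat γ' chat : ℝ) (hα : 0 < α) (hδ : 0 < δ) (hδ1 : δ < 1)
    (hc : ∀ (p : EuclideanSpace ℝ (Fin 2)) (ρ : ℝ), 0 < ρ →
      ∑ s ∈ S, (μH[1] (segment ℝ s.1 s.2 ∩ square p ρ)).toReal ≤ c * ρ)
    (longSet : EuclideanSpace ℝ (Fin 2) × ℝ →
      Finset (EuclideanSpace ℝ (Fin 2) × EuclideanSpace ℝ (Fin 2)))
    (hlongSet : ∀ Q ∈ cells, ∀ s, s ∈ longSet Q ↔ s ∈ S ∧ α * Q.2 ≤ dist s.1 s.2 ∧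
      (segment ℝ s.1 s.2 ∩ square Q.1 Q.2).Nonempty)
    (hγ' : γ' = (1 + δ) ^ 2 / (1 - δ))
    (hNub : ∀ Q ∈ cells, ((longSet Q).card : ℝ) ≤ N)
    (hNatt : ∃ Q ∈ cells, ((longSet Q).card : ℝ) = N)
    (hest : Nhat ≤ N ∧ N ≤ γ' * Nhat)
    (hchat : chat = Nhat * α / (1 + α)) :
    (∀ Q ∈ cells,
        ((∑ s ∈ longSet Q, (μH[1] (segment ℝ s.1 s.2 ∩ square Q.1 Q.2)).toReal) / Q.2) /
          (Real.sqrt 8 * γ' * ((1 + α) / α)) ≤ chat) ∧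
      chat ≤ c := by
  obtain ⟨hNhatN, hNγ⟩ := hest
  have hγ'pos : 0 < γ' := hγ' ▸ div_pos (by positivity) (by linarith)
  refine ⟨fun Q hQ => ?_, ?_⟩
  · have hr := hrpos Q hQ
    rw [div_le_iff₀ (by positivity), div_le_iff₀ hr]
    calc _ ≤ (longSet Q).card * (√8 * Q.2) := sum_clippedLength_le_card_mul _ _ hr.le
      _ ≤ γ' * Nhat * (√8 * Q.2) := by gcongr; exact (hNub Q hQ).trans hNγ
      _ = chat * (√8 * γ' * ((1 + α) / α)) * Q.2 := by rw [hchat]; field_simp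
  · obtain ⟨Q, hQ, hNQ⟩ := hNatt
    have hr := hrpos Q hQ
    have hlong : N * (α * Q.2) ≤ c * (Q.2 + α * Q.2) := calc
      N * (α * Q.2)
        ≤ ∑ s ∈ longSet Q, (μH[1] (segment ℝ s.1 s.2 ∩ square Q.1 (Q.2 + α * Q.2))).toReal :=
          hNQ ▸ card_mul_le_sum_clippedLength _ _ fun s hs => ((hlongSet Q hQ s).1 hs).2
      _ ≤ ∑ s ∈ S, (μH[1] (segment ℝ s.1 s.2 ∩ square Q.1 (Q.2 + α * Q.2))).toReal :=
          Finset.sum_le_sum_of_subset_of_nonneg (fun s hs => ((hlongSet Q hQ s).1 hs).1)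
            fun _ _ _ => ENNReal.toReal_nonneg
      _ ≤ c * (Q.2 + α * Q.2) := hc Q.1 _ (by positivity)
    have hNα : N * α ≤ c * (1 + α) := (mul_le_mul_iff_of_pos_right hr).1 (by linarith)
    rw [hchat, div_le_iff₀ (by positivity)]
    exact (mul_le_mul_of_nonneg_right hNhatN hα.le).trans hNα
end

section
/- Let S be a finite set of segments and T a finite quadtree whose cells include, for some collection of squares 𝒮, for each Q ∈ 𝒮 a cell Q' ⊇ Q with side(Q') ≤ 6√2·side(Q). If additionally every cell of T lies in [0,1)² (so that cong(Q') ≤ cong(S) for all cells), then cong(𝒮)/(6√2) ≤ cong(T) ≤ cong(S), where cong of a set of squares is the maximum congestion over its members. -/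
open Real MeasureTheory

/-- The congestion of a square (given by center and radius) w.r.t. the segment set `S`:
total length of `S` clipped to the square, divided by half the side length. -/
noncomputable def congOf (S : Finset (EuclideanSpace ℝ (Fin 2) × EuclideanSpace ℝ (Fin 2)))
    (Q : EuclideanSpace ℝ (Fin 2) × ℝ) : ℝ :=
  (∑ s ∈ S, (μH[1] (segment ℝ s.1 s.2 ∩ square Q.1 Q.2)).toReal) / Q.2

/-- Let `T` be a finite quadtree whose cells include, for each square `Q ∈ 𝒮`, a cell
`Q' ⊇ Q` of side length at most `6√2` times that of `Q`, and whose cells all lie inside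
`[0,1)²` (so each cell has congestion at most `cong(S) = c`). Then
`cong(𝒮)/(6√2) ≤ cong(T) ≤ cong(S)`. -/
theorem stmt_17 (S : Finset (EuclideanSpace ℝ (Fin 2) × EuclideanSpace ℝ (Fin 2)))
    (squares cells : Finset (EuclideanSpace ℝ (Fin 2) × ℝ))
    (hSne : squares.Nonempty) (hTne : cells.Nonempty)
    (hrS : ∀ Q ∈ squares, 0 < Q.2) (hrT : ∀ Q ∈ cells, 0 < Q.2)
    (c : ℝ)
    (hc : ∀ (p : EuclideanSpace ℝ (Fin 2)) (ρ : ℝ), 0 < ρ →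
      ∑ s ∈ S, (μH[1] (segment ℝ s.1 s.2 ∩ square p ρ)).toReal ≤ c * ρ)
    (hcover : ∀ Q ∈ squares, ∃ Q' ∈ cells,
      square Q.1 Q.2 ⊆ square Q'.1 Q'.2 ∧ 2 * Q'.2 ≤ 6 * Real.sqrt 2 * (2 * Q.2))
    (hunit : ∀ Q' ∈ cells, square Q'.1 Q'.2 ⊆ {x | ∀ i, 0 ≤ x i ∧ x i < 1}) :
    squares.sup' hSne (congOf S) / (6 * Real.sqrt 2) ≤ cells.sup' hTne (congOf S) ∧
      cells.sup' hTne (congOf S) ≤ c := by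

  have h62 : (0:ℝ) < 6 * Real.sqrt 2 := by positivity
  constructor
  · rw [div_le_iff₀ h62]
    apply Finset.sup'_le
    intro Q hQ
    obtain ⟨Q', hQ', hsub, hside⟩ := hcover Q hQ
    have hrQ := hrS Q hQ
    have hrQ' := hrT Q' hQ'
    have hn : (∑ s ∈ S, (μH[1] (segment ℝ s.1 s.2 ∩ square Q.1 Q.2)).toReal)
        ≤ ∑ s ∈ S, (μH[1] (segment ℝ s.1 s.2 ∩ square Q'.1 Q'.2)).toReal := by
      apply Finset.sum_le_sum
      intro s hs
      apply ENNReal.toReal_mono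
      · intro htop
        have hle : μH[1] (segment ℝ s.1 s.2 ∩ square Q'.1 Q'.2) ≤ μH[1] (segment ℝ s.1 s.2) :=
          measure_mono Set.inter_subset_left
        rw [hausdorffMeasure_segment] at hle
        exact (edist_ne_top s.1 s.2) (top_le_iff.mp (htop ▸ hle))
      · exact measure_mono (Set.inter_subset_inter_right _ hsub)
    have hn' : 0 ≤ ∑ s ∈ S, (μH[1] (segment ℝ s.1 s.2 ∩ square Q'.1 Q'.2)).toReal :=
      Finset.sum_nonneg fun s _ => ENNReal.toReal_nonneg
    have hstep : congOf S Q / (6 * Real.sqrt 2) ≤ congOf S Q' := by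
      unfold congOf
      rw [div_div, mul_comm]
      exact div_le_div₀ hn' hn hrQ' (by nlinarith)
    calc congOf S Q ≤ congOf S Q' * (6 * Real.sqrt 2) := by
          rw [← div_le_iff₀ h62]; exact hstep
      _ ≤ cells.sup' hTne (congOf S) * (6 * Real.sqrt 2) := by
          have := Finset.le_sup' (congOf S) hQ'
          nlinarith
  · apply Finset.sup'_le
    intro Q' hQ'
    have hrQ' := hrT Q' hQ'
    unfold congOf
    rw [div_le_iff₀ hrQ']
    exact hc Q'.1 Q'.2 hrQ'
end
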